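/- arXiv:2310.12972 — 3 statements merged into one kernel-verified Lean document; each statement's English description precedes it below -/
import Mathlib

section
/- Let S and A be real normed vector spaces, let f : S × A → S be the ground-truth one-step residual dynamics and f̂ : S × A → S a learned approximation. Fix an expert transition (s*, a*, s*₊) with s*₊ = s* + f(s*, a*), an action perturbation Δ ∈ A, and a candidate state s^G ∈ S. Suppose: (i) f is K_S-Lipschitz in the state argument with action a* on a set U_S ⊆ S containing both s^G and s*, i.e. ‖f(s₁, a*) − f(s₂, a*)‖ ≤ K_S‖s₁ − s₂‖ for s₁, s₂ ∈ U_S; (ii) f is K_A-Lipschitz in the action argument at state s^G on a set U_A ⊆ A containing both a* and a* + Δ, i.e. ‖f(s^G, a₁) − f(s^G, a₂)‖ ≤ K_A‖a₁ − a₂‖ for a₁, a₂ ∈ U_A; (iii) the root-finding residual is ε_opt := s*₊ − f̂(s^G, a* + Δ) − s^G ∈ S. Then ‖f(s^G, a* + Δ) − f̂(s^G, a* + Δ)‖ ≤ K_A‖Δ‖ + (1 + K_S)‖s^G − s*‖ + ‖ε_opt‖. -/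
/-!
The learned label satisfies `f̂(s^G, a* + Δ) = f(s*, a*) + (s* − s^G) − ε_opt`, so the label error
splits as `(f(s^G, a* + Δ) − f(s*, a*)) + (s^G − s*) + ε_opt`. The first term is bounded by moving
the action from `a* + Δ` to `a*` at state `s^G`, then the state from `s^G` to `s*` at action `a*`.
-/

theorem norm_sub_le_of_lipschitz_action_state {S A E : Type*} [SeminormedAddCommGroup S]
    [SeminormedAddCommGroup A] [SeminormedAddCommGroup E] (g : S × A → E) {s s' : S} {a b : A}
    {K_S K_A : ℝ} {U : Set S} {V : Set A} (hs : s ∈ U) (hs' : s' ∈ U) (ha : a ∈ V) (hb : b ∈ V)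
    (hLipS : ∀ s₁ ∈ U, ∀ s₂ ∈ U, ‖g (s₁, a) - g (s₂, a)‖ ≤ K_S * ‖s₁ - s₂‖)
    (hLipA : ∀ a₁ ∈ V, ∀ a₂ ∈ V, ‖g (s, a₁) - g (s, a₂)‖ ≤ K_A * ‖a₁ - a₂‖) :
    ‖g (s, b) - g (s', a)‖ ≤ K_A * ‖b - a‖ + K_S * ‖s - s'‖ :=
  calc ‖g (s, b) - g (s', a)‖ ≤ ‖g (s, b) - g (s, a)‖ + ‖g (s, a) - g (s', a)‖ :=
        norm_sub_le_norm_sub_add_norm_sub ..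
    _ ≤ K_A * ‖b - a‖ + K_S * ‖s - s'‖ := add_le_add (hLipA b hb a ha) (hLipS s hs s' hs')

theorem disturbed_action_label_quality_general
    {S A : Type*} [NormedAddCommGroup S]
    [NormedAddCommGroup A]
    (f fhat : S × A → S)
    (sStar sPlus sG : S) (aStar Δ : A)
    (K_S K_A : ℝ) (εopt : S)
    (hTrans : sPlus = sStar + f (sStar, aStar))
    (US : Set S) (hG_S : sG ∈ US) (hS_S : sStar ∈ US)
    (hLipS : ∀ s₁ ∈ US, ∀ s₂ ∈ US,
      ‖f (s₁, aStar) - f (s₂, aStar)‖ ≤ K_S * ‖s₁ - s₂‖)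
    (UA : Set A) (hA : aStar ∈ UA) (hAΔ : aStar + Δ ∈ UA)
    (hLipA : ∀ a₁ ∈ UA, ∀ a₂ ∈ UA,
      ‖f (sG, a₁) - f (sG, a₂)‖ ≤ K_A * ‖a₁ - a₂‖)
    (hOpt : εopt = sPlus - fhat (sG, aStar + Δ) - sG) :
    ‖f (sG, aStar + Δ) - fhat (sG, aStar + Δ)‖ ≤
      K_A * ‖Δ‖ + (1 + K_S) * ‖sG - sStar‖ + ‖εopt‖ := by
  have hDynamics : ‖f (sG, aStar + Δ) - f (sStar, aStar)‖ ≤ K_A * ‖Δ‖ + K_S * ‖sG - sStar‖ := by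
    simpa using norm_sub_le_of_lipschitz_action_state f hG_S hS_S hA hAΔ hLipS hLipA
  calc ‖f (sG, aStar + Δ) - fhat (sG, aStar + Δ)‖
        = ‖(f (sG, aStar + Δ) - f (sStar, aStar)) + (sG - sStar) + εopt‖ := by
          rw [hOpt, hTrans]; congr 1; abel
    _ ≤ ‖f (sG, aStar + Δ) - f (sStar, aStar)‖ + ‖sG - sStar‖ + ‖εopt‖ := norm_add₃_le
    _ ≤ K_A * ‖Δ‖ + K_S * ‖sG - sStar‖ + ‖sG - sStar‖ + ‖εopt‖ := by gcongr
    _ = K_A * ‖Δ‖ + (1 + K_S) * ‖sG - sStar‖ + ‖εopt‖ := by ring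

theorem disturbed_action_label_quality
    {S A : Type*} [NormedAddCommGroup S] [NormedSpace ℝ S]
    [NormedAddCommGroup A] [NormedSpace ℝ A]
    (f fhat : S × A → S)
    (sStar sPlus sG : S) (aStar Δ : A)
    (K_S K_A : ℝ) (εopt : S)
    (hTrans : sPlus = sStar + f (sStar, aStar))
    (US : Set S) (hG_S : sG ∈ US) (hS_S : sStar ∈ US)
    (hLipS : ∀ s₁ ∈ US, ∀ s₂ ∈ US,
      ‖f (s₁, aStar) - f (s₂, aStar)‖ ≤ K_S * ‖s₁ - s₂‖)
    (UA : Set A) (hA : aStar ∈ UA) (hAΔ : aStar + Δ ∈ UA)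
    (hLipA : ∀ a₁ ∈ UA, ∀ a₂ ∈ UA,
      ‖f (sG, a₁) - f (sG, a₂)‖ ≤ K_A * ‖a₁ - a₂‖)
    (hOpt : εopt = sPlus - fhat (sG, aStar + Δ) - sG) :
    ‖f (sG, aStar + Δ) - fhat (sG, aStar + Δ)‖ ≤
      K_A * ‖Δ‖ + (1 + K_S) * ‖sG - sStar‖ + ‖εopt‖ :=
  disturbed_action_label_quality_general f fhat sStar sPlus sG aStar Δ K_S K_A εopt hTrans US hG_S
    hS_S hLipS UA hA hAΔ hLipA hOpt
end

section
/- Let S and A be real normed vector spaces, let f : S × A → S be the ground-truth one-step residual dynamics and f̂ : S × A → S a learned approximation. Fix an expert data point (s*, a*) ∈ S × A and a state s^G ∈ S that exactly solves the BackTrack root-finding equation, i.e. s^G + f̂(s^G, a*) = s*. Suppose: (i) ‖f(s*, a*) − f̂(s*, a*)‖ ≤ ε; (ii) f̂ is K₁-Lipschitz in the state argument with action a* on a set Û ⊆ S containing s^G and s*; (iii) f is K₂-Lipschitz in the state argument with action a* on a set U ⊆ S containing s^G and s*. Then the generated label (s^G, a*, s*) is corrective with respect to the true dynamics with error bound ‖s^G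 + f(s^G, a*) − s*‖ ≤ ε + (K₁ + K₂)‖s^G − s*‖. -/
theorem norm_add_sub_le_of_add_eq {S : Type*} [SeminormedAddCommGroup S] (g ĝ : S → S)
    {x y : S} (hroot : x + ĝ x = y) :
    ‖x + g x - y‖ ≤ ‖g y - ĝ y‖ + ‖g x - g y‖ + ‖ĝ x - ĝ y‖ := by
  calc ‖x + g x - y‖ = ‖(g x - g y) + (g y - ĝ y) + (ĝ y - ĝ x)‖ := by
        rw [← hroot]; congr 1; abel
    _ ≤ ‖g x - g y‖ + ‖g y - ĝ y‖ + ‖ĝ y - ĝ x‖ := norm_add₃_le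
    _ = ‖g y - ĝ y‖ + ‖g x - g y‖ + ‖ĝ x - ĝ y‖ := by rw [norm_sub_rev (ĝ y)]; ring

theorem backtrack_label_corrective_general
    {S A : Type*} [NormedAddCommGroup S]
    (f fhat : S × A → S)
    (sStar sG : S) (aStar : A)
    (ε K₁ K₂ : ℝ)
    (hRoot : sG + fhat (sG, aStar) = sStar)
    (hε : ‖f (sStar, aStar) - fhat (sStar, aStar)‖ ≤ ε)
    (Uhat : Set S) (hG_hat : sG ∈ Uhat) (hS_hat : sStar ∈ Uhat)
    (hLip_hat : ∀ s₁ ∈ Uhat, ∀ s₂ ∈ Uhat,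
      ‖fhat (s₁, aStar) - fhat (s₂, aStar)‖ ≤ K₁ * ‖s₁ - s₂‖)
    (U : Set S) (hG : sG ∈ U) (hS : sStar ∈ U)
    (hLip : ∀ s₁ ∈ U, ∀ s₂ ∈ U,
      ‖f (s₁, aStar) - f (s₂, aStar)‖ ≤ K₂ * ‖s₁ - s₂‖) :
    ‖sG + f (sG, aStar) - sStar‖ ≤ ε + (K₁ + K₂) * ‖sG - sStar‖ := by
  have hsplit := norm_add_sub_le_of_add_eq (fun s ↦ f (s, aStar)) (fun s ↦ fhat (s, aStar)) hRoot
  have htrue := hLip sG hG sStar hS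
  have hmodel := hLip_hat sG hG_hat sStar hS_hat
  linarith

theorem backtrack_label_corrective
    {S A : Type*} [NormedAddCommGroup S] [NormedSpace ℝ S]
    [NormedAddCommGroup A] [NormedSpace ℝ A]
    (f fhat : S × A → S)
    (sStar sG : S) (aStar : A)
    (ε K₁ K₂ : ℝ)
    (hRoot : sG + fhat (sG, aStar) = sStar)
    (hε : ‖f (sStar, aStar) - fhat (sStar, aStar)‖ ≤ ε)
    (Uhat : Set S) (hG_hat : sG ∈ Uhat) (hS_hat : sStar ∈ Uhat)
    (hLip_hat : ∀ s₁ ∈ Uhat, ∀ s₂ ∈ Uhat,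
      ‖fhat (s₁, aStar) - fhat (s₂, aStar)‖ ≤ K₁ * ‖s₁ - s₂‖)
    (U : Set S) (hG : sG ∈ U) (hS : sStar ∈ U)
    (hLip : ∀ s₁ ∈ U, ∀ s₂ ∈ U,
      ‖f (s₁, aStar) - f (s₂, aStar)‖ ≤ K₂ * ‖s₁ - s₂‖) :
    ‖sG + f (sG, aStar) - sStar‖ ≤ ε + (K₁ + K₂) * ‖sG - sStar‖ :=
  backtrack_label_corrective_general f fhat sStar sG aStar ε K₁ K₂ hRoot hε Uhat hG_hat hS_hat
    hLip_hat U hG hS hLip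
end

section
/- Let S and A be real normed vector spaces, let f : S × A → S be the ground-truth one-step residual dynamics and f̂ : S × A → S a learned approximation. Fix an expert transition (s*, a*, s*₊) with s*₊ = s* + f(s*, a*), an action perturbation Δ ∈ A, and a state s^G ∈ S that exactly solves the DisturbedAction root-finding equation, i.e. s^G + f̂(s^G, a* + Δ) = s*₊. Suppose: (i) f is K_S-Lipschitz in the state argument with action a* on a set U_S ⊆ S containing s^G and s*; (ii) f is K_A-Lipschitz in the action argument at state s^G on a set U_A ⊆ A containing a* and a* + Δ. Then the generated label (s^G, a* + Δ, s*₊) is corrective with respect to the true dynamics with error bound ‖s^G + f(s^G, a* + Δ) − s*₊‖ ≤ K_A‖Δ‖ + (1 + K_S)‖s^G − s*‖. -/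
/-! Split the deviation from the expert successor into the change of action at `sG`, the change
of state under the expert action, and the change of the state itself; the two Lipschitz
hypotheses bound the first two terms. -/

theorem norm_residual_step_sub_le {S A : Type*} [SeminormedAddCommGroup S]
    (g : S × A → S) (s₁ s₂ : S) (a₁ a₂ : A) :
    ‖s₁ + g (s₁, a₁) - (s₂ + g (s₂, a₂))‖ ≤
      ‖g (s₁, a₁) - g (s₁, a₂)‖ + ‖g (s₁, a₂) - g (s₂, a₂)‖ + ‖s₁ - s₂‖ := by
  have hsplit : s₁ + g (s₁, a₁) - (s₂ + g (s₂, a₂)) =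
      (g (s₁, a₁) - g (s₁, a₂)) + (g (s₁, a₂) - g (s₂, a₂)) + (s₁ - s₂) := by
    abel
  rw [hsplit]
  exact norm_add₃_le

theorem disturbed_action_label_corrective_general
    {S A : Type*} [NormedAddCommGroup S]
    [NormedAddCommGroup A]
    (f : S × A → S)
    (sStar sPlus sG : S) (aStar Δ : A)
    (K_S K_A : ℝ)
    (hTrans : sPlus = sStar + f (sStar, aStar))
    (US : Set S) (hG_S : sG ∈ US) (hS_S : sStar ∈ US)
    (hLipS : ∀ s₁ ∈ US, ∀ s₂ ∈ US,
      ‖f (s₁, aStar) - f (s₂, aStar)‖ ≤ K_S * ‖s₁ - s₂‖)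
    (UA : Set A) (hA : aStar ∈ UA) (hAΔ : aStar + Δ ∈ UA)
    (hLipA : ∀ a₁ ∈ UA, ∀ a₂ ∈ UA,
      ‖f (sG, a₁) - f (sG, a₂)‖ ≤ K_A * ‖a₁ - a₂‖) :
    ‖sG + f (sG, aStar + Δ) - sPlus‖ ≤
      K_A * ‖Δ‖ + (1 + K_S) * ‖sG - sStar‖ := by
  have hAction := hLipA (aStar + Δ) hAΔ aStar hA
  rw [add_sub_cancel_left] at hAction
  have hState := hLipS sG hG_S sStar hS_S
  calc ‖sG + f (sG, aStar + Δ) - sPlus‖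
      ≤ ‖f (sG, aStar + Δ) - f (sG, aStar)‖ + ‖f (sG, aStar) - f (sStar, aStar)‖
          + ‖sG - sStar‖ := hTrans ▸ norm_residual_step_sub_le f sG sStar (aStar + Δ) aStar
    _ ≤ K_A * ‖Δ‖ + K_S * ‖sG - sStar‖ + ‖sG - sStar‖ := by gcongr
    _ = K_A * ‖Δ‖ + (1 + K_S) * ‖sG - sStar‖ := by ring

theorem disturbed_action_label_corrective
    {S A : Type*} [NormedAddCommGroup S] [NormedSpace ℝ S]
    [NormedAddCommGroup A] [NormedSpace ℝ A]
    (f fhat : S × A → S)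
    (sStar sPlus sG : S) (aStar Δ : A)
    (K_S K_A : ℝ)
    (hTrans : sPlus = sStar + f (sStar, aStar))
    (hRoot : sG + fhat (sG, aStar + Δ) = sPlus)
    (US : Set S) (hG_S : sG ∈ US) (hS_S : sStar ∈ US)
    (hLipS : ∀ s₁ ∈ US, ∀ s₂ ∈ US,
      ‖f (s₁, aStar) - f (s₂, aStar)‖ ≤ K_S * ‖s₁ - s₂‖)
    (UA : Set A) (hA : aStar ∈ UA) (hAΔ : aStar + Δ ∈ UA)
    (hLipA : ∀ a₁ ∈ UA, ∀ a₂ ∈ UA,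
      ‖f (sG, a₁) - f (sG, a₂)‖ ≤ K_A * ‖a₁ - a₂‖) :
    ‖sG + f (sG, aStar + Δ) - sPlus‖ ≤
      K_A * ‖Δ‖ + (1 + K_S) * ‖sG - sStar‖ :=
  disturbed_action_label_corrective_general f sStar sPlus sG aStar Δ K_S K_A hTrans US hG_S hS_S
    hLipS UA hA hAΔ hLipA
end
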